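/- For every real 2×2 matrix v = (v^i_μ), write z(v) = u₁ ∧ u₂ with u₁ = ∂x¹ + v¹₁∂y¹ + v²₁∂y² and u₂ = ∂x² + v¹₂∂y¹ + v²₂∂y², let T_{z(v)}D := span{ w ∧ u₂, u₁ ∧ w : w ∈ ℝ⁴ } ⊆ ⋀²ℝ⁴, let ω := dx¹∧dx² and T_{z(v)}D^ω := T_{z(v)}D ∩ ker ω, and define κ(v) := (v¹₁v²₂ − v¹₂v²₁) dx¹∧dx² − v²₂ dy¹∧dx² + v¹₂ dy²∧dx² + v²₁ dx¹∧dy¹ − v¹₁ dx¹∧dy² + dy¹∧dy² ∈ (⋀²ℝ⁴)*. Then the annihilator of T_{z(v)}D in (⋀²ℝ⁴)* is the line ℝ·κ(v), and the annihilator of T_{z(v)}D^ω in (⋀²ℝ⁴)* is the plane ℝ·κ(v) ⊕ ℝ·(dx¹∧dx²). -/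
import Mathlib


open ExteriorAlgebra

set_option synthInstance.maxHeartbeats 1000000
set_option maxHeartbeats 1000000

/-- The wedge `v₁ ∧ ⋯ ∧ vₙ` of `n` vectors, as an element of the `n`-th exterior power. -/
noncomputable def wedge {Q : Type*} [AddCommGroup Q] [Module ℝ Q] (n : ℕ) (v : Fin n → Q) :
    ⋀[ℝ]^n Q :=
  ⟨ExteriorAlgebra.ιMulti ℝ n v, ExteriorAlgebra.ιMulti_range ℝ n ⟨v, rfl⟩⟩

/-- The element of the dual of `⋀[ℝ]^n Q` induced by an alternating `n`-form on `Q`. -/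
noncomputable def extDual {Q : Type*} [AddCommGroup Q] [Module ℝ Q] (n : ℕ)
    (φ : Q [⋀^Fin n]→ₗ[ℝ] ℝ) : Module.Dual ℝ (⋀[ℝ]^n Q) :=
  (ExteriorAlgebra.liftAlternating
      (Function.update (fun i => (0 : Q [⋀^Fin i]→ₗ[ℝ] ℝ)) n φ)).comp
    (⋀[ℝ]^n Q).subtype

/-- The basis covector `dξᵃ ∧ dξᵇ ∈ (⋀²ℝ⁴)*`, sending `w₀ ∧ w₁` to
`w₀ᵃ w₁ᵇ − w₁ᵃ w₀ᵇ`.  With the labels `(ξ⁰,ξ¹,ξ²,ξ³) = (x¹,x²,y¹,y²)`, `dd 0 1 = dx¹∧dx²`,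
`dd 2 1 = dy¹∧dx²`, `dd 3 1 = dy²∧dx²`, `dd 0 2 = dx¹∧dy¹`, `dd 0 3 = dx¹∧dy²`,
`dd 2 3 = dy¹∧dy²`. -/
noncomputable def dd (a b : Fin 4) : Module.Dual ℝ (⋀[ℝ]^2 (Fin 4 → ℝ)) :=
  extDual 2 ((Matrix.detRowAlternating : (Fin 2 → ℝ) [⋀^Fin 2]→ₗ[ℝ] ℝ).compLinearMap
    (LinearMap.pi ![(LinearMap.proj a : (Fin 4 → ℝ) →ₗ[ℝ] ℝ), LinearMap.proj b]))

/-- The vectors `u₁ = ∂x¹ + v¹₁∂y¹ + v²₁∂y²`, `u₂ = ∂x² + v¹₂∂y¹ + v²₂∂y²` associated with a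
`2×2` matrix `v` (where `v i μ = v^(i+1)_(μ+1)`). -/
noncomputable def ucol (v : Fin 2 → Fin 2 → ℝ) (μ : Fin 2) : Fin 4 → ℝ :=
  (Pi.single (Fin.castLE (by norm_num) μ) 1 : Fin 4 → ℝ) + v 0 μ • (Pi.single 2 1 : Fin 4 → ℝ) + v 1 μ • (Pi.single 3 1 : Fin 4 → ℝ)

/-- The Plücker chart `z(v) = u₁ ∧ u₂ ∈ ⋀²ℝ⁴`. -/
noncomputable def zmap (v : Fin 2 → Fin 2 → ℝ) : ⋀[ℝ]^2 (Fin 4 → ℝ) :=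
  wedge 2 (ucol v)

/-- `κ(v) = (v¹₁v²₂ − v¹₂v²₁) dx¹∧dx² − v²₂ dy¹∧dx² + v¹₂ dy²∧dx² + v²₁ dx¹∧dy¹
− v¹₁ dx¹∧dy² + dy¹∧dy²`. -/
noncomputable def kap (v : Fin 2 → Fin 2 → ℝ) : Module.Dual ℝ (⋀[ℝ]^2 (Fin 4 → ℝ)) :=
  (v 0 0 * v 1 1 - v 0 1 * v 1 0) • dd 0 1 - v 1 1 • dd 2 1 + v 0 1 • dd 3 1
    + v 1 0 • dd 0 2 - v 0 0 • dd 0 3 + dd 2 3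

lemma iMulti_two (a b : Fin 4 → ℝ) :
    ιMulti ℝ 2 ![a, b] = ι ℝ a * ι ℝ b := by
  rw [ιMulti_apply]; simp [List.ofFn_succ]

lemma iota_swap (x y : Fin 4 → ℝ) : ι ℝ y * ι ℝ x = -(ι ℝ x * ι ℝ y) := by
  have h := ι_add_mul_swap (R := ℝ) x y
  rw [add_eq_zero_iff_neg_eq] at h
  exact h.symm

noncomputable def Wm : (Fin 4 → ℝ) →ₗ[ℝ] (Fin 4 → ℝ) →ₗ[ℝ] ⋀[ℝ]^2 (Fin 4 → ℝ) :=
  LinearMap.mk₂ ℝ (fun a b => wedge 2 ![a, b])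
    (fun a a' b => Subtype.ext <| by
      simp [wedge, iMulti_two, map_add, add_mul])
    (fun c a b => Subtype.ext <| by
      simp [wedge, iMulti_two, map_smul, smul_mul_assoc])
    (fun a b b' => Subtype.ext <| by
      simp [wedge, iMulti_two, map_add, mul_add])
    (fun c a b => Subtype.ext <| by
      simp [wedge, iMulti_two, map_smul, mul_smul_comm])

lemma Wm_apply (a b : Fin 4 → ℝ) : Wm a b = wedge 2 ![a, b] := rfl

lemma Wm_self (a : Fin 4 → ℝ) : Wm a a = 0 := Subtype.ext <| by
  simp [Wm_apply, wedge, iMulti_two, ι_sq_zero]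

lemma Wm_swap (a b : Fin 4 → ℝ) : Wm b a = -Wm a b := Subtype.ext <| by
  show ιMulti ℝ 2 ![b, a] = -(ιMulti ℝ 2 ![a, b] : ExteriorAlgebra ℝ (Fin 4 → ℝ))
  rw [iMulti_two, iMulti_two, iota_swap]

lemma vec_eta (w : Fin 2 → (Fin 4 → ℝ)) : ![w 0, w 1] = w := by
  funext i; fin_cases i <;> rfl

lemma wedge_eq_Wm (w : Fin 2 → (Fin 4 → ℝ)) : wedge 2 w = Wm (w 0) (w 1) := by
  rw [Wm_apply, vec_eta]

lemma wedge_span : Submodule.span ℝ (Set.range (wedge (Q := Fin 4 → ℝ) 2)) = ⊤ := by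
  apply Submodule.map_injective_of_injective
    (show Function.Injective (⋀[ℝ]^2 (Fin 4 → ℝ)).subtype from Subtype.coe_injective)
  rw [Submodule.map_span, Submodule.map_top, Submodule.range_subtype]
  rw [show (⋀[ℝ]^2 (Fin 4 → ℝ)).subtype '' Set.range (wedge 2)
      = Set.range (ιMulti ℝ 2 (M := Fin 4 → ℝ)) from ?_]
  · exact ιMulti_span_fixedDegree ℝ 2
  · ext x
    constructor
    · rintro ⟨-, ⟨w, rfl⟩, rfl⟩; exact ⟨w, rfl⟩
    · rintro ⟨w, rfl⟩; exact ⟨wedge 2 w, ⟨w, rfl⟩, rfl⟩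

lemma dd_eval (a b : Fin 4) (w : Fin 2 → Fin 4 → ℝ) :
    dd a b (wedge 2 w) = w 0 a * w 1 b - w 1 a * w 0 b := by
  show (ExteriorAlgebra.liftAlternating _) ((wedge 2 w : ⋀[ℝ]^2 (Fin 4 → ℝ)) : ExteriorAlgebra ℝ (Fin 4 → ℝ)) = _
  show (ExteriorAlgebra.liftAlternating _) (ιMulti ℝ 2 w) = _
  rw [liftAlternating_apply_ιMulti, Function.update_self, AlternatingMap.compLinearMap_apply]
  show Matrix.det (Matrix.of fun i => (LinearMap.pi ![(LinearMap.proj a : (Fin 4 → ℝ) →ₗ[ℝ] ℝ), LinearMap.proj b]) (w i)) = _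
  rw [Matrix.det_fin_two]
  simp
  ring

lemma decomp (x : Fin 4 → ℝ) : x = x 0 • (Pi.single 0 1 : Fin 4 → ℝ) + x 1 • (Pi.single 1 1 : Fin 4 → ℝ)
    + x 2 • (Pi.single 2 1 : Fin 4 → ℝ) + x 3 • (Pi.single 3 1 : Fin 4 → ℝ) := by
  funext a
  fin_cases a <;> simp [Pi.single_apply]

noncomputable def bw (a b : Fin 4) : ⋀[ℝ]^2 (Fin 4 → ℝ) :=
  Wm (Pi.single a 1) (Pi.single b 1)

lemma wedge_expand (w : Fin 2 → (Fin 4 → ℝ)) :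
    wedge 2 w = (w 0 0 * w 1 1 - w 1 0 * w 0 1) • bw 0 1 + (w 0 0 * w 1 2 - w 1 0 * w 0 2) • bw 0 2
      + (w 0 0 * w 1 3 - w 1 0 * w 0 3) • bw 0 3 + (w 0 1 * w 1 2 - w 1 1 * w 0 2) • bw 1 2
      + (w 0 1 * w 1 3 - w 1 1 * w 0 3) • bw 1 3 + (w 0 2 * w 1 3 - w 1 2 * w 0 3) • bw 2 3 := by
  rw [wedge_eq_Wm]
  simp only [bw]
  conv_lhs => rw [decomp (w 0), decomp (w 1)]
  simp only [map_add, map_smul, LinearMap.add_apply, LinearMap.smul_apply]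
  simp only [Wm_self,
    show Wm (Pi.single 1 1 : Fin 4 → ℝ) (Pi.single 0 1) = -Wm (Pi.single 0 1) (Pi.single 1 1) from Wm_swap _ _,
    show Wm (Pi.single 2 1 : Fin 4 → ℝ) (Pi.single 0 1) = -Wm (Pi.single 0 1) (Pi.single 2 1) from Wm_swap _ _,
    show Wm (Pi.single 3 1 : Fin 4 → ℝ) (Pi.single 0 1) = -Wm (Pi.single 0 1) (Pi.single 3 1) from Wm_swap _ _,
    show Wm (Pi.single 2 1 : Fin 4 → ℝ) (Pi.single 1 1) = -Wm (Pi.single 1 1) (Pi.single 2 1) from Wm_swap _ _,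
    show Wm (Pi.single 3 1 : Fin 4 → ℝ) (Pi.single 1 1) = -Wm (Pi.single 1 1) (Pi.single 3 1) from Wm_swap _ _,
    show Wm (Pi.single 3 1 : Fin 4 → ℝ) (Pi.single 2 1) = -Wm (Pi.single 2 1) (Pi.single 3 1) from Wm_swap _ _]
  show _ = _
  module

lemma bw_wedge (a b : Fin 4) : bw a b = wedge 2 ![Pi.single a 1, Pi.single b 1] := rfl

lemma dual_expand (p : Module.Dual ℝ (⋀[ℝ]^2 (Fin 4 → ℝ))) (w : Fin 2 → (Fin 4 → ℝ)) :
    p (wedge 2 w) = (w 0 0 * w 1 1 - w 1 0 * w 0 1) * p (bw 0 1)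
      + (w 0 0 * w 1 2 - w 1 0 * w 0 2) * p (bw 0 2)
      + (w 0 0 * w 1 3 - w 1 0 * w 0 3) * p (bw 0 3)
      + (w 0 1 * w 1 2 - w 1 1 * w 0 2) * p (bw 1 2)
      + (w 0 1 * w 1 3 - w 1 1 * w 0 3) * p (bw 1 3)
      + (w 0 2 * w 1 3 - w 1 2 * w 0 3) * p (bw 2 3) := by
  rw [wedge_expand w]
  simp [map_add, map_smul, smul_eq_mul]

lemma dd_bw (a b c d : Fin 4) :
    dd a b (bw c d) = (Pi.single c 1 : Fin 4 → ℝ) a * (Pi.single d 1 : Fin 4 → ℝ) b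
      - (Pi.single d 1 : Fin 4 → ℝ) a * (Pi.single c 1 : Fin 4 → ℝ) b := by
  rw [bw_wedge, dd_eval]
  simp

lemma kap_eval (v : Fin 2 → Fin 2 → ℝ) (w : Fin 2 → (Fin 4 → ℝ)) :
    kap v (wedge 2 w) = (v 0 0 * v 1 1 - v 0 1 * v 1 0) * (w 0 0 * w 1 1 - w 1 0 * w 0 1)
      - v 1 1 * (w 0 2 * w 1 1 - w 1 2 * w 0 1) + v 0 1 * (w 0 3 * w 1 1 - w 1 3 * w 0 1)
      + v 1 0 * (w 0 0 * w 1 2 - w 1 0 * w 0 2) - v 0 0 * (w 0 0 * w 1 3 - w 1 0 * w 0 3)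
      + (w 0 2 * w 1 3 - w 1 2 * w 0 3) := by
  simp [kap, dd_eval, LinearMap.sub_apply, LinearMap.add_apply, LinearMap.smul_apply, smul_eq_mul]

lemma ucol0_app (v : Fin 2 → Fin 2 → ℝ) : ucol v 0 = ![1, 0, v 0 0, v 1 0] := by
  funext a; fin_cases a <;> simp [ucol, Pi.single_apply, Fin.castLE]

lemma ucol1_app (v : Fin 2 → Fin 2 → ℝ) : ucol v 1 = ![0, 1, v 0 1, v 1 1] := by
  funext a; fin_cases a <;> simp [ucol, Pi.single_apply, Fin.castLE]

/-- Section 2.2.2 of the paper: the annihilator of `T_{z(v)}D` is the line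
`ℝ·κ(v)`, and the annihilator of `T_{z(v)}D^ω` (with `ω = dx¹∧dx²`) is the plane
`ℝ·κ(v) ⊕ ℝ·dx¹∧dx²`. -/
theorem statement14 (v : Fin 2 → Fin 2 → ℝ)
    (TzD : Submodule ℝ (⋀[ℝ]^2 (Fin 4 → ℝ)))
    (hTzD : TzD = Submodule.span ℝ
      {w | ∃ q : Fin 4 → ℝ, w = wedge 2 ![q, ucol v 1] ∨ w = wedge 2 ![ucol v 0, q]})
    (TzDω : Submodule ℝ (⋀[ℝ]^2 (Fin 4 → ℝ)))
    (hTzDω : TzDω = TzD ⊓ LinearMap.ker (dd 0 1)) :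
    Submodule.dualAnnihilator TzD = Submodule.span ℝ {kap v} ∧
      LinearIndependent ℝ ![kap v, dd 0 1] ∧
      Submodule.dualAnnihilator TzDω = Submodule.span ℝ {kap v, dd 0 1} := by
  subst hTzDω hTzD
  set S : Set (⋀[ℝ]^2 (Fin 4 → ℝ)) :=
    {w | ∃ q : Fin 4 → ℝ, w = wedge 2 ![q, ucol v 1] ∨ w = wedge 2 ![ucol v 0, q]} with hS
  -- κ vanishes on S
  have hκS : ∀ x ∈ S, kap v x = 0 := by
    rintro x ⟨q, rfl | rfl⟩ <;> rw [kap_eval] <;> simp [ucol1_app, ucol0_app] <;> ring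
  have hκann : kap v ∈ (Submodule.span ℝ S).dualAnnihilator := by
    rw [Submodule.mem_dualAnnihilator]
    intro w hw
    have hle : Submodule.span ℝ S ≤ LinearMap.ker (kap v) :=
      Submodule.span_le.2 fun x hx => LinearMap.mem_ker.2 (hκS x hx)
    exact LinearMap.mem_ker.1 (hle hw)
  -- evaluations of κ and dd 0 1 on basis wedges
  have hκ23 : kap v (bw 2 3) = 1 := by
    rw [bw_wedge, kap_eval]; simp [Pi.single_apply]
  have hdd23 : dd 0 1 (bw 2 3) = 0 := by rw [dd_bw]; simp [Pi.single_apply]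
  have hdd01 : dd 0 1 (bw 0 1) = 1 := by rw [dd_bw]; simp [Pi.single_apply]
  -- membership of generators
  have mem2 : wedge 2 ![(Pi.single 2 1 : Fin 4 → ℝ), ucol v 1] ∈ S := ⟨_, Or.inl rfl⟩
  have mem3 : wedge 2 ![(Pi.single 3 1 : Fin 4 → ℝ), ucol v 1] ∈ S := ⟨_, Or.inl rfl⟩
  have mem5 : wedge 2 ![ucol v 0, (Pi.single 2 1 : Fin 4 → ℝ)] ∈ S := ⟨_, Or.inr rfl⟩
  have mem6 : wedge 2 ![ucol v 0, (Pi.single 3 1 : Fin 4 → ℝ)] ∈ S := ⟨_, Or.inr rfl⟩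
  have mem0 : wedge 2 ![(Pi.single 0 1 : Fin 4 → ℝ), ucol v 1] ∈ S := ⟨_, Or.inl rfl⟩
  -- kernel facts
  have ker2 : dd 0 1 (wedge 2 ![(Pi.single 2 1 : Fin 4 → ℝ), ucol v 1]) = 0 := by
    rw [dd_eval]; simp [ucol1_app, Pi.single_apply]
  have ker3 : dd 0 1 (wedge 2 ![(Pi.single 3 1 : Fin 4 → ℝ), ucol v 1]) = 0 := by
    rw [dd_eval]; simp [ucol1_app, Pi.single_apply]
  have ker5 : dd 0 1 (wedge 2 ![ucol v 0, (Pi.single 2 1 : Fin 4 → ℝ)]) = 0 := by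
    rw [dd_eval]; simp [ucol0_app, Pi.single_apply]
  have ker6 : dd 0 1 (wedge 2 ![ucol v 0, (Pi.single 3 1 : Fin 4 → ℝ)]) = 0 := by
    rw [dd_eval]; simp [ucol0_app, Pi.single_apply]
  refine ⟨?_, ?_, ?_⟩
  · -- annihilator of TzD
    apply le_antisymm
    · intro p hp
      rw [Submodule.mem_dualAnnihilator] at hp
      have h2 := hp _ (Submodule.subset_span mem2)
      have h3 := hp _ (Submodule.subset_span mem3)
      have h5 := hp _ (Submodule.subset_span mem5)
      have h6 := hp _ (Submodule.subset_span mem6)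
      have h0 := hp _ (Submodule.subset_span mem0)
      rw [dual_expand] at h2 h3 h5 h6 h0
      simp [ucol1_app, ucol0_app, Pi.single_apply] at h2 h3 h5 h6 h0
      have e12 : p (bw 1 2) = v 1 1 * p (bw 2 3) := by linear_combination -h2
      have e13 : p (bw 1 3) = -(v 0 1 * p (bw 2 3)) := by linear_combination -h3
      have e02 : p (bw 0 2) = v 1 0 * p (bw 2 3) := by linear_combination h5
      have e03 : p (bw 0 3) = -(v 0 0 * p (bw 2 3)) := by linear_combination h6
      have e01 : p (bw 0 1) = (v 0 0 * v 1 1 - v 0 1 * v 1 0) * p (bw 2 3) := by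
        linear_combination h0 - v 0 1 * e02 - v 1 1 * e03
      rw [Submodule.mem_span_singleton]
      refine ⟨p (bw 2 3), ?_⟩
      apply LinearMap.ext_on wedge_span
      rintro x ⟨w, rfl⟩
      rw [LinearMap.smul_apply, smul_eq_mul, kap_eval, dual_expand, e01, e02, e03, e12, e13]
      ring
    · rw [Submodule.span_le, Set.singleton_subset_iff]
      exact hκann
  · -- linear independence
    rw [linearIndependent_fin2]
    constructor
    · intro h
      have : dd 0 1 (bw 0 1) = 0 := by
        rw [show dd 0 1 = ![kap v, dd 0 1] 1 from rfl, h]; rfl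
      rw [hdd01] at this; exact one_ne_zero this
    · intro a h
      have := congrArg (fun f => f (bw 2 3)) h
      simp only [Matrix.cons_val_one, Matrix.head_cons, Matrix.cons_val_zero,
        LinearMap.smul_apply, smul_eq_mul] at this
      rw [hdd23, hκ23, mul_zero] at this
      exact one_ne_zero this.symm
  · -- annihilator of TzDω
    apply le_antisymm
    · intro p hp
      rw [Submodule.mem_dualAnnihilator] at hp
      have h2 := hp _ ⟨Submodule.subset_span mem2, LinearMap.mem_ker.2 ker2⟩
      have h3 := hp _ ⟨Submodule.subset_span mem3, LinearMap.mem_ker.2 ker3⟩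
      have h5 := hp _ ⟨Submodule.subset_span mem5, LinearMap.mem_ker.2 ker5⟩
      have h6 := hp _ ⟨Submodule.subset_span mem6, LinearMap.mem_ker.2 ker6⟩
      rw [dual_expand] at h2 h3 h5 h6
      simp [ucol1_app, ucol0_app, Pi.single_apply] at h2 h3 h5 h6
      have e12 : p (bw 1 2) = v 1 1 * p (bw 2 3) := by linear_combination -h2
      have e13 : p (bw 1 3) = -(v 0 1 * p (bw 2 3)) := by linear_combination -h3
      have e02 : p (bw 0 2) = v 1 0 * p (bw 2 3) := by linear_combination h5
      have e03 : p (bw 0 3) = -(v 0 0 * p (bw 2 3)) := by linear_combination h6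
      rw [Submodule.mem_span_pair]
      refine ⟨p (bw 2 3), p (bw 0 1) - (v 0 0 * v 1 1 - v 0 1 * v 1 0) * p (bw 2 3), ?_⟩
      apply LinearMap.ext_on wedge_span
      rintro x ⟨w, rfl⟩
      rw [LinearMap.add_apply, LinearMap.smul_apply, LinearMap.smul_apply, smul_eq_mul,
        smul_eq_mul, kap_eval, dd_eval, dual_expand, e02, e03, e12, e13]
      ring
    · rw [Submodule.span_le]
      intro f hf
      rw [Set.mem_insert_iff, Set.mem_singleton_iff] at hf
      rcases hf with rfl | rfl
      · exact Submodule.dualAnnihilator_anti inf_le_left hκann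
      · rw [SetLike.mem_coe, Submodule.mem_dualAnnihilator]
        rintro w ⟨-, hw⟩
        exact LinearMap.mem_ker.1 hw
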